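/- The horseshoe density with τ = 1 satisfies the two-sided bounds (K/2) log(1 + 4/β²) ≤ π(β) ≤ K log(1 + 2/β²) for all β ≠ 0, where K = 1/√(2π³). -/

import Mathlib

/-!
Substituting `t = λ⁻²` turns the density into `π(β) = K ∫₀^∞ e^{-st} / (1 + t) dt` with
`s = β² / 2`. By Frullani, `log (1 + a / s) = ∫₀^∞ e^{-st} (1 - e^{-at}) / t dt`, so both bounds
follow by comparing integrands: `1 / (1 + t) ≤ (1 - e^{-t}) / t` because `(1 + t) e^{-t} ≤ 1`, and
`(1 - e^{-2t}) / t ≤ 2 / (1 + t)` because `2t ≤ log ((1 + t) / (1 - t))` for `0 ≤ t < 1`.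
-/

open Real MeasureTheory Set

/-- The horseshoe density with scale `τ = 1`. -/
noncomputable def horseshoeDensity (β : ℝ) : ℝ :=
  ∫ lam in Ioi (0 : ℝ),
    (1 / Real.sqrt (2 * Real.pi * lam ^ 2)) * Real.exp (-β ^ 2 / (2 * lam ^ 2)) *
      (2 / (Real.pi * (1 + lam ^ 2)))

lemma two_mul_le_log_sub_log {x : ℝ} (h0 : 0 ≤ x) (h1 : x < 1) :
    2 * x ≤ log (1 + x) - log (1 - x) := by
  have hsum := hasSum_log_sub_log_of_abs_lt_one (abs_lt.2 ⟨by linarith, h1⟩)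
  simpa using le_hasSum hsum 0 fun k _ => by positivity

lemma one_sub_le_one_add_mul_exp_neg_two_mul {t : ℝ} (ht : 0 ≤ t) :
    1 - t ≤ (1 + t) * exp (-2 * t) := by
  rcases le_or_gt 1 t with h1 | h1
  · nlinarith [exp_pos (-2 * t)]
  · have hlog : 2 * t ≤ log ((1 + t) / (1 - t)) := by
      rw [log_div (by linarith) (by linarith)]
      exact two_mul_le_log_sub_log ht h1
    have hexp : exp (2 * t) * (1 - t) ≤ 1 + t := by
      rw [← le_div_iff₀ (by linarith)]
      exact (le_log_iff_exp_le (by positivity)).1 hlog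
    have hinv : exp (2 * t) * exp (-2 * t) = 1 := by rw [← exp_add]; simp
    nlinarith [exp_pos (-2 * t)]

lemma one_div_one_add_le_one_sub_exp_neg_div {t : ℝ} (ht : 0 < t) :
    1 / (1 + t) ≤ (1 - exp (-t)) / t := by
  have h : (1 + t) * exp (-t) ≤ 1 := by
    have hinv : exp t * exp (-t) = 1 := by rw [← exp_add]; simp
    nlinarith [add_one_le_exp t, exp_pos (-t)]
  rw [div_le_div_iff₀ (by linarith) ht]
  linarith

lemma one_sub_exp_neg_two_mul_div_le {t : ℝ} (ht : 0 < t) :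
    (1 - exp (-2 * t)) / t ≤ 2 / (1 + t) := by
  rw [div_le_div_iff₀ ht (by linarith)]
  linarith [one_sub_le_one_add_mul_exp_neg_two_mul ht.le]

lemma integral_exp_neg_mul_Ioi {u : ℝ} (hu : 0 < u) : ∫ t in Ioi 0, exp (-u * t) = u⁻¹ := by
  simpa [div_neg, neg_div] using integral_exp_mul_Ioi (neg_lt_zero.2 hu) 0

lemma integral_exp_neg_mul_Ioc {s b t : ℝ} (hsb : s ≤ b) (ht : t ≠ 0) :
    ∫ u in Ioc s b, exp (-u * t) = (exp (-s * t) - exp (-b * t)) / t := by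
  have hderiv (u : ℝ) : HasDerivAt (fun u => -exp (-u * t) / t) (exp (-u * t)) u :=
    ((((hasDerivAt_neg u).mul_const t).exp.neg).div_const t).congr_deriv (by field_simp)
  rw [← intervalIntegral.integral_of_le hsb,
    intervalIntegral.integral_eq_sub_of_hasDerivAt (fun u _ => hderiv u)
      ((by fun_prop : Continuous fun u => exp (-u * t)).intervalIntegrable _ _)]
  ring

lemma integrable_exp_neg_mul_prod {s b : ℝ} (hs : 0 < s) :
    Integrable (Function.uncurry fun t u => exp (-u * t))
      ((volume.restrict (Ioi 0)).prod (volume.restrict (Ioc s b))) := by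
  have hdom : Integrable (fun p : ℝ × ℝ => exp (-s * p.1) * 1)
      ((volume.restrict (Ioi 0)).prod (volume.restrict (Ioc s b))) :=
    (exp_neg_integrableOn_Ioi 0 hs).mul_prod (integrable_const 1)
  refine hdom.mono' (by fun_prop : Continuous _).aestronglyMeasurable ?_
  rw [Measure.prod_restrict]
  filter_upwards [ae_restrict_mem (measurableSet_Ioi.prod measurableSet_Ioc)] with p hp
  have hmono : -p.2 * p.1 ≤ -s * p.1 := by nlinarith [hp.1.out, hp.2.1]
  rw [mul_one, Function.uncurry_apply_pair, Real.norm_of_nonneg (exp_pos _).le]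
  exact exp_le_exp.2 hmono

lemma integrableOn_exp_neg_mul_sub_div {s b : ℝ} (hs : 0 < s) (hsb : s ≤ b) :
    IntegrableOn (fun t => (exp (-s * t) - exp (-b * t)) / t) (Ioi 0) := by
  refine (integrable_exp_neg_mul_prod (b := b) hs).integral_prod_left.congr ?_
  filter_upwards [ae_restrict_mem measurableSet_Ioi] with t ht
  exact integral_exp_neg_mul_Ioc hsb ht.out.ne'

/-- Frullani's integral: write the integrand as `∫ u in Ioc s b, exp (-u * t)` and swap the
order of integration. -/
theorem integral_exp_neg_mul_sub_div {s b : ℝ} (hs : 0 < s) (hsb : s ≤ b) :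
    ∫ t in Ioi 0, (exp (-s * t) - exp (-b * t)) / t = log (b / s) := by
  have hinner : EqOn (fun t => (exp (-s * t) - exp (-b * t)) / t)
      (fun t => ∫ u in Ioc s b, exp (-u * t)) (Ioi 0) :=
    fun t ht => (integral_exp_neg_mul_Ioc hsb ht.out.ne').symm
  rw [setIntegral_congr_fun measurableSet_Ioi hinner,
    integral_integral_swap (integrable_exp_neg_mul_prod hs),
    setIntegral_congr_fun measurableSet_Ioc
      fun u hu => integral_exp_neg_mul_Ioi (hs.trans_le hu.1.le),
    ← intervalIntegral.integral_of_le hsb, integral_inv]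
  rw [uIcc_of_le hsb]
  exact fun h => hs.not_ge h.1

lemma exp_neg_mul_sub_exp_neg_add_mul_div (s a t : ℝ) :
    (exp (-s * t) - exp (-(s + a) * t)) / t = exp (-s * t) * ((1 - exp (-a * t)) / t) := by
  rw [show -(s + a) * t = -s * t + -a * t by ring, exp_add]
  ring

lemma integrableOn_exp_neg_mul_div_one_add {s : ℝ} (hs : 0 < s) :
    IntegrableOn (fun t => exp (-s * t) / (1 + t)) (Ioi 0) := by
  have hcont : ContinuousOn (fun t => exp (-s * t) / (1 + t)) (Ioi 0) :=
    (by fun_prop : Continuous fun t => exp (-s * t)).continuousOn.div (by fun_prop)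
      fun t (ht : 0 < t) => (by linarith : 0 < 1 + t).ne'
  refine (exp_neg_integrableOn_Ioi 0 hs).mono' (hcont.aestronglyMeasurable measurableSet_Ioi) ?_
  filter_upwards [ae_restrict_mem measurableSet_Ioi] with t (ht : 0 < t)
  have hpos : 0 < 1 + t := by linarith
  rw [norm_of_nonneg (div_pos (exp_pos _) hpos).le]
  exact div_le_self (exp_pos _).le (by linarith)

lemma integral_exp_neg_mul_div_one_add_le_log {s : ℝ} (hs : 0 < s) :
    ∫ t in Ioi 0, exp (-s * t) / (1 + t) ≤ log (1 + 1 / s) := by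
  have hsb : s ≤ s + 1 := by linarith
  rw [show 1 + 1 / s = (s + 1) / s by field_simp, ← integral_exp_neg_mul_sub_div hs hsb]
  refine setIntegral_mono_on (integrableOn_exp_neg_mul_div_one_add hs)
    (integrableOn_exp_neg_mul_sub_div hs hsb) measurableSet_Ioi fun t (ht : 0 < t) => ?_
  calc exp (-s * t) / (1 + t) = exp (-s * t) * (1 / (1 + t)) := by ring
    _ ≤ exp (-s * t) * ((1 - exp (-1 * t)) / t) := by
      rw [neg_one_mul]
      exact mul_le_mul_of_nonneg_left (one_div_one_add_le_one_sub_exp_neg_div ht) (exp_pos _).le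
    _ = _ := (exp_neg_mul_sub_exp_neg_add_mul_div s 1 t).symm

lemma log_div_two_le_integral_exp_neg_mul_div_one_add {s : ℝ} (hs : 0 < s) :
    log (1 + 2 / s) / 2 ≤ ∫ t in Ioi 0, exp (-s * t) / (1 + t) := by
  have hsb : s ≤ s + 2 := by linarith
  rw [div_le_iff₀ two_pos, ← integral_mul_const, show 1 + 2 / s = (s + 2) / s by field_simp,
    ← integral_exp_neg_mul_sub_div hs hsb]
  refine setIntegral_mono_on (integrableOn_exp_neg_mul_sub_div hs hsb)
    ((integrableOn_exp_neg_mul_div_one_add hs).mul_const 2) measurableSet_Ioi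
    fun t (ht : 0 < t) => ?_
  calc (exp (-s * t) - exp (-(s + 2) * t)) / t = exp (-s * t) * ((1 - exp (-2 * t)) / t) :=
        exp_neg_mul_sub_exp_neg_add_mul_div s 2 t
    _ ≤ exp (-s * t) * (2 / (1 + t)) :=
      mul_le_mul_of_nonneg_left (one_sub_exp_neg_two_mul_div_le ht) (exp_pos _).le
    _ = exp (-s * t) / (1 + t) * 2 := by ring

lemma horseshoeDensity_eq (β : ℝ) :
    horseshoeDensity β =
      1 / sqrt (2 * π ^ 3) * ∫ t in Ioi 0, exp (-(β ^ 2 / 2) * t) / (1 + t) := by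
  rw [horseshoeDensity, ← integral_comp_rpow_Ioi _ (by norm_num : (-(1 / 2) : ℝ) ≠ 0),
    ← integral_const_mul]
  refine setIntegral_congr_fun measurableSet_Ioi fun x (hx : 0 < x) => ?_
  have hsq : (x ^ (-(1 / 2) : ℝ)) ^ 2 = x⁻¹ := by
    rw [← rpow_natCast, ← rpow_mul hx.le]
    norm_num [rpow_neg_one]
  have hpow : x ^ (-(1 / 2) - 1 : ℝ) = (x * sqrt x)⁻¹ := by
    rw [show (-(1 / 2) - 1 : ℝ) = -(1 + 1 / 2) by norm_num, rpow_neg hx.le, rpow_add hx,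
      rpow_one, ← sqrt_eq_rpow]
  have hsqrt : sqrt (2 * π * x⁻¹) = sqrt (2 * π) / sqrt x := by
    rw [sqrt_mul (by positivity), sqrt_inv, div_eq_mul_inv]
  have hsqrt3 : sqrt (2 * π ^ 3) = sqrt (2 * π) * π := by
    rw [show 2 * π ^ 3 = 2 * π * π ^ 2 by ring, sqrt_mul (by positivity), sqrt_sq pi_pos.le]
  simp only [smul_eq_mul, hsq, hpow, hsqrt, hsqrt3, abs_neg, abs_div, abs_one, abs_two]
  field_simp
  ring_nf

/-- Carvalho–Polson–Scott bounds: with `K = 1/√(2π³)`,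
`(K/2) log(1 + 4/β²) ≤ π(β) ≤ K log(1 + 2/β²)` for all `β ≠ 0`. -/
theorem horseshoeDensity_bounds (β : ℝ) (hβ : β ≠ 0) :
    (1 / Real.sqrt (2 * Real.pi ^ 3)) / 2 * Real.log (1 + 4 / β ^ 2) ≤
        horseshoeDensity β ∧
      horseshoeDensity β ≤
        (1 / Real.sqrt (2 * Real.pi ^ 3)) * Real.log (1 + 2 / β ^ 2) := by
  have hs : 0 < β ^ 2 / 2 := by positivity
  have hK : 0 ≤ 1 / sqrt (2 * π ^ 3) := by positivity
  have hlower := log_div_two_le_integral_exp_neg_mul_div_one_add hs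
  have hupper := integral_exp_neg_mul_div_one_add_le_log hs
  rw [show 2 / (β ^ 2 / 2) = 4 / β ^ 2 by ring] at hlower
  rw [show 1 / (β ^ 2 / 2) = 2 / β ^ 2 by ring] at hupper
  rw [horseshoeDensity_eq]
  constructor
  · calc 1 / sqrt (2 * π ^ 3) / 2 * log (1 + 4 / β ^ 2)
        = 1 / sqrt (2 * π ^ 3) * (log (1 + 4 / β ^ 2) / 2) := by ring
      _ ≤ _ := mul_le_mul_of_nonneg_left hlower hK
  · exact mul_le_mul_of_nonneg_left hupper hK
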